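/- For every even M_init and even O_init there exists an initial configuration with those parameters in which all robots have the same color (namely an edge-view-symmetric one) from which no deterministic algorithm achieves gathering. -/

import Mathlib

set_option autoImplicit false

/-! ### Luminous myopic robots on an anonymous ring: basic model -/

/-- A configuration of `R` luminous robots with light colors in `C`
on an anonymous ring with `N` nodes (the nodes are `ZMod N`). -/
structure Config (N R : ℕ) (C : Type) where
  pos : Fin R → ZMod N
  light : Fin R → C

namespace Gathering

variable {N R : ℕ} {C : Type}

/-- The set of light colors present at node `u`. -/
def colorsAt (cfg : Config N R C) (u : ZMod N) : Set C :=
  {c | ∃ r, cfg.pos r = u ∧ cfg.light r = c}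

/-- Node `u` hosts at least one robot. -/
def occupiedNode (cfg : Config N R C) (u : ZMod N) : Prop :=
  ∃ r, cfg.pos r = u

/-- The view from node `u` with visibility range `φ`, in orientation `dir`:
the set of colors at signed offset `k`, for `|k| ≤ φ` (and `∅` beyond the range). -/
def nodeView (φ : ℕ) (cfg : Config N R C) (u : ZMod N) (dir : Bool) : ℤ → Set C :=
  fun k => if |k| ≤ (φ : ℤ) then
      colorsAt cfg (u + (if dir then (k : ZMod N) else ((-k : ℤ) : ZMod N)))
    else ∅

/-- Node `u` is a border node: it is occupied, all `φ` nodes on one side are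
empty, and some node within distance `φ` on the other side is occupied. -/
def isBorderNode (φ : ℕ) (cfg : Config N R C) (u : ZMod N) : Prop :=
  occupiedNode cfg u ∧
  ∃ dir : Bool,
    (∀ k : ℤ, 1 ≤ k → k ≤ (φ : ℤ) →
      ¬ occupiedNode cfg (u + (if dir then (k : ZMod N) else ((-k : ℤ) : ZMod N)))) ∧
    (∃ k : ℤ, 1 ≤ k ∧ k ≤ (φ : ℤ) ∧
      occupiedNode cfg (u + (if dir then ((-k : ℤ) : ZMod N) else (k : ZMod N))))

/-- Robot `r` is a border robot. -/
def isBorderRobot (φ : ℕ) (cfg : Config N R C) (r : Fin R) : Prop :=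
  isBorderNode φ cfg (cfg.pos r)

/-- The borders of a configuration: an occupied node together with a direction
in which the next `φ` nodes are all empty (their number is always even). -/
def borderPairs (φ : ℕ) (cfg : Config N R C) : Set (ZMod N × Bool) :=
  {p | occupiedNode cfg p.1 ∧
    ∀ k : ℤ, 1 ≤ k → k ≤ (φ : ℤ) →
      ¬ occupiedNode cfg (p.1 + (if p.2 then (k : ZMod N) else ((-k : ℤ) : ZMod N)))}

/-- Ring distance between two nodes. -/
def ringDist (u v : ZMod N) : ℕ := min (u - v).val (v - u).val

/-- Robots `r` and `r'` can observe each other. -/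
def canSee (φ : ℕ) (cfg : Config N R C) (r r' : Fin R) : Prop :=
  ringDist (cfg.pos r) (cfg.pos r') ≤ φ

/-- The visibility graph of the configuration is connected. -/
def VisConnected (φ : ℕ) (cfg : Config N R C) : Prop :=
  ∀ r r' : Fin R, Relation.ReflTransGen (canSee φ cfg) r r'

/-- The span of a configuration: the least `m` such that all occupied nodes fit
in a window of `m + 1` consecutive nodes.  In a configuration with exactly two
borders this is the distance `D` between the two border nodes. -/
noncomputable def spanDist (cfg : Config N R C) : ℕ :=
  sInf {m : ℕ | ∃ b : ZMod N, ∀ u, occupiedNode cfg u → ∃ i : ℕ, i ≤ m ∧ u = b + (i : ZMod N)}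

/-! ### Algorithms and asynchronous executions -/

/-- A deterministic algorithm for luminous robots in the full-light model:
given the robot's own color and its (oriented) view, output a new color and a
movement (`+1`, `0` or `-1`, relative to the orientation of the view). -/
structure Algo (C : Type) where
  out : C → (ℤ → Set C) → C × SignType

/-- The destination of a movement `m` from node `u`, for view orientation `dir`. -/
def moveTarget (u : ZMod N) (dir : Bool) (m : SignType) : ZMod N :=
  u + (if dir then ((m : ℤ) : ZMod N) else ((-(m : ℤ) : ℤ) : ZMod N))

/-- An execution of algorithm `A` under a fair asynchronous scheduler.
At each instant every robot either stays idle, performs a Look (together with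
the deterministic Compute, recording a plan: a new color and a destination
node; the orientation of the snapshot is chosen adversarially, as robots are
disoriented), becomes visible with its new color (end of the Compute phase,
keeping its pending plan), or performs its atomic Move, completing the cycle.
A robot `r` with `plan t r ≠ none` is a robot whose view may be outdated. -/
structure AsyncExec (N R : ℕ) (C : Type) (φ : ℕ) (A : Algo C) where
  cfg : ℕ → Config N R C
  plan : ℕ → Fin R → Option (C × ZMod N)
  init_plan : ∀ r, plan 0 r = none
  step : ∀ (t : ℕ) (r : Fin R),
      ((cfg (t+1)).pos r = (cfg t).pos r ∧ (cfg (t+1)).light r = (cfg t).light r ∧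
        plan (t+1) r = plan t r)
    ∨ (plan t r = none ∧ (cfg (t+1)).pos r = (cfg t).pos r ∧
        (cfg (t+1)).light r = (cfg t).light r ∧
        ∃ dir : Bool,
          plan (t+1) r =
            some ((A.out ((cfg t).light r) (nodeView φ (cfg t) ((cfg t).pos r) dir)).1,
              moveTarget ((cfg t).pos r) dir
                (A.out ((cfg t).light r) (nodeView φ (cfg t) ((cfg t).pos r) dir)).2))
    ∨ (∃ c u, plan t r = some (c, u) ∧ (cfg (t+1)).pos r = (cfg t).pos r ∧
        (cfg (t+1)).light r = c ∧ plan (t+1) r = some (c, u))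
    ∨ (∃ c u, plan t r = some (c, u) ∧ (cfg (t+1)).pos r = u ∧
        (cfg (t+1)).light r = c ∧ plan (t+1) r = none)
  fair : ∀ (r : Fin R) (t : ℕ), ∃ t', t ≤ t' ∧ plan t' r ≠ none ∧ plan (t'+1) r = none

/-- The execution achieves gathering: from some time on, all robots occupy a
single node and remain there forever. -/
def AchievesGathering {N R : ℕ} {C : Type} {φ : ℕ} {A : Algo C}
    (e : AsyncExec N R C φ A) : Prop :=
  ∃ (t : ℕ) (u : ZMod N), ∀ t', t ≤ t' → ∀ r, (e.cfg t').pos r = u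

/-! ### Initial configurations -/

/-- The robots occupy a segment `G'` of `Minit` nodes with base (border) node
`b`: both endpoints of the segment are occupied and are borders (the `φ` nodes
beyond each endpoint are empty), every occupied node lies in the segment,
consecutive occupied nodes are at distance at most `φ` (`H_init ≤ φ`, i.e. the
visibility graph is connected), and `Oinit` is the number of occupied nodes of
the segment. -/
def SegmentInitOn (φ : ℕ) (cfg : Config N R C) (b : ZMod N) (Minit Oinit : ℕ) : Prop :=
  2 ≤ Minit ∧
  occupiedNode cfg b ∧ occupiedNode cfg (b + ((Minit - 1 : ℕ) : ZMod N)) ∧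
  (∀ u, occupiedNode cfg u → ∃ i : ℕ, i < Minit ∧ u = b + (i : ZMod N)) ∧
  (∀ k : ℕ, 1 ≤ k → k ≤ φ →
    ¬ occupiedNode cfg (b - (k : ZMod N)) ∧
    ¬ occupiedNode cfg (b + ((Minit - 1 : ℕ) : ZMod N) + (k : ZMod N))) ∧
  (∀ i : ℕ, i + 1 < Minit → occupiedNode cfg (b + (i : ZMod N)) →
    ∃ j : ℕ, i < j ∧ j ≤ i + φ ∧ j < Minit ∧ occupiedNode cfg (b + (j : ZMod N))) ∧
  Oinit = {i : Fin Minit | occupiedNode cfg (b + ((i : ℕ) : ZMod N))}.ncard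

/-- Admissible initial configuration: all robots have the color `white`, and
the robots occupy a segment with two borders and connected visibility graph. -/
def AdmissibleInit (φ : ℕ) (cfg : Config N R C) (white : C) (Minit Oinit : ℕ) : Prop :=
  (∀ r, cfg.light r = white) ∧ ∃ b : ZMod N, SegmentInitOn φ cfg b Minit Oinit

/-! ### Edge-view symmetry and cautiousness -/

/-- Robots `r1` and `r2` are indistinguishable: they have the same color and
the same view (up to reversal, as robots are disoriented). -/
def viewsEq (φ : ℕ) (cfg : Config N R C) (r1 r2 : Fin R) : Prop :=
  cfg.light r1 = cfg.light r2 ∧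
  (nodeView φ cfg (cfg.pos r1) true = nodeView φ cfg (cfg.pos r2) true ∨
   nodeView φ cfg (cfg.pos r1) true = nodeView φ cfg (cfg.pos r2) false)

/-- Definition 20: a configuration is edge-view-symmetric if at least two
distinct nodes host robots and there is an edge `(u_i, u_{i+1})` such that for
every `k ≥ 0`, every robot at `u_{i-k}` has an indistinguishable counterpart at
`u_{i+k+1}`. -/
def EdgeViewSymmetric (φ : ℕ) (cfg : Config N R C) : Prop :=
  (∃ u v : ZMod N, u ≠ v ∧ occupiedNode cfg u ∧ occupiedNode cfg v) ∧
  ∃ i : ZMod N, ∀ (k : ℕ) (r1 : Fin R), cfg.pos r1 = i - (k : ZMod N) →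
    ∃ r2 : Fin R, cfg.pos r2 = i + (k : ZMod N) + 1 ∧ viewsEq φ cfg r1 r2

/-- Definition 23: an algorithm is cautious if robots only ever move toward
other occupied nodes (they never expand the span of the visibility graph). -/
def Cautious (φ : ℕ) (A : Algo C) : Prop :=
  ∀ (c : C) (v : ℤ → Set C),
    ((A.out c v).2 = 1 → ∃ k : ℤ, 1 ≤ k ∧ k ≤ (φ : ℤ) ∧ v k ≠ ∅) ∧
    ((A.out c v).2 = -1 → ∃ k : ℤ, 1 ≤ k ∧ k ≤ (φ : ℤ) ∧ v (-k) ≠ ∅)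

end Gathering

namespace Gathering

/-! ### Algorithm 1 (three colors) -/

/-- The three light colors of Algorithm 1. -/
inductive C3 : Type
  | White
  | Red
  | Blue
deriving DecidableEq

open Classical in
/-- The rules of Algorithm 1, for a view oriented so that the `φ` nodes at
negative offsets are empty (the observing robot is a border robot and the
positive direction points inward), in priority order
R1, R2a, R2b, R3a, R3b, R4a, R4b, R5. -/
noncomputable def algo1Rules (φ : ℕ) (c : C3) (v : ℤ → Set C3) : C3 × SignType :=
  -- R1 : ∅^φ [W!] (¬∅^φ)  ::  R
  if c = C3.White ∧ v 0 = {C3.White} then (C3.Red, 0)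
  -- R2a : ∅^φ [R!] (∅, B!) (¬(∅^(φ-1)))  ::  B, →
  else if c = C3.Red ∧ v 0 = {C3.Red} ∧ (v 1 = ∅ ∨ v 1 = {C3.Blue}) ∧
      ¬ (∀ k : ℤ, 2 ≤ k → k ≤ (φ : ℤ) → v k = ∅) then (C3.Blue, 1)
  -- R2b : ∅^φ [R!] (W) (?^(φ-1))  ::  B, →
  else if c = C3.Red ∧ v 0 = {C3.Red} ∧ C3.White ∈ v 1 ∧
      (∀ k : ℤ, 2 ≤ k → k ≤ (φ : ℤ) → v k ≠ ∅) then (C3.Blue, 1)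
  -- R3a : ∅^φ [B!] (∅, R!) (¬(∅^(φ-1)))  ::  R, →
  else if c = C3.Blue ∧ v 0 = {C3.Blue} ∧ (v 1 = ∅ ∨ v 1 = {C3.Red}) ∧
      ¬ (∀ k : ℤ, 2 ≤ k → k ≤ (φ : ℤ) → v k = ∅) then (C3.Red, 1)
  -- R3b : ∅^φ [B!] (W) (?^(φ-1))  ::  R, →
  else if c = C3.Blue ∧ v 0 = {C3.Blue} ∧ C3.White ∈ v 1 ∧
      (∀ k : ℤ, 2 ≤ k → k ≤ (φ : ℤ) → v k ≠ ∅) then (C3.Red, 1)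
  -- R4a : ∅^φ [R [W]] (¬∅^φ)  ::  R
  else if c = C3.White ∧ C3.Red ∈ v 0 then (C3.Red, 0)
  -- R4b : ∅^φ [B [W]] (¬∅^φ)  ::  B
  else if c = C3.White ∧ C3.Blue ∈ v 0 then (C3.Blue, 0)
  -- R5 : ∅^φ [R!] (B!) (∅^(φ-1))  ::  B, →
  else if c = C3.Red ∧ v 0 = {C3.Red} ∧ v 1 = {C3.Blue} ∧
      (∀ k : ℤ, 2 ≤ k → k ≤ (φ : ℤ) → v k = ∅) then (C3.Blue, 1)
  else (c, 0)

open Classical in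
/-- Algorithm 1: the rules are applied in the orientation in which the `φ`
nearest nodes on one side are all empty.  A robot seeing no other robot does
nothing (rule R0), and no rule is enabled for a non-border robot. -/
noncomputable def algo1 (φ : ℕ) : Algo C3 where
  out := fun c v =>
    if (∀ k : ℤ, 1 ≤ k → k ≤ (φ : ℤ) → v (-k) = ∅) ∧
       (∀ k : ℤ, 1 ≤ k → k ≤ (φ : ℤ) → v k = ∅) then (c, 0)
    else if ∀ k : ℤ, 1 ≤ k → k ≤ (φ : ℤ) → v (-k) = ∅ then algo1Rules φ c v
    else if ∀ k : ℤ, 1 ≤ k → k ≤ (φ : ℤ) → v k = ∅ then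
      ((algo1Rules φ c (fun k => v (-k))).1, -(algo1Rules φ c (fun k => v (-k))).2)
    else (c, 0)

/-! ### Algorithm 2 (four colors) -/

/-- The four light colors of Algorithm 2. -/
inductive C4 : Type
  | White
  | Red
  | Blue
  | Purple
deriving DecidableEq

open Classical in
/-- The rules of Algorithm 2, for a view oriented so that the `φ` nodes at
negative offsets are empty, in priority order
R1, R2a-1, R2a-2, R2b, R3a-1, R3a-2, R3b, R4a, R4b, R5a, R5b-1, R5b-2, R5b-3. -/
noncomputable def algo2Rules (φ : ℕ) (c : C4) (v : ℤ → Set C4) : C4 × SignType :=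
  -- R1 : ∅^φ [W!] (¬∅^φ)  ::  R
  if c = C4.White ∧ v 0 = {C4.White} then (C4.Red, 0)
  -- R2a-1 : ∅^φ [R!] (∅) (¬(∅^(φ-1)))  ::  →
  else if c = C4.Red ∧ v 0 = {C4.Red} ∧ v 1 = ∅ ∧
      ¬ (∀ k : ℤ, 2 ≤ k → k ≤ (φ : ℤ) → v k = ∅) then (C4.Red, 1)
  -- R2a-2 : ∅^φ [R!] (¬W, R) (¬(∅^(φ-1)))  ::  →
  else if c = C4.Red ∧ v 0 = {C4.Red} ∧ (C4.Red ∈ v 1 ∧ C4.White ∉ v 1) ∧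
      ¬ (∀ k : ℤ, 2 ≤ k → k ≤ (φ : ℤ) → v k = ∅) then (C4.Red, 1)
  -- R2b : ∅^φ [R!] (W) (?^(φ-1))  ::  B, →
  else if c = C4.Red ∧ v 0 = {C4.Red} ∧ C4.White ∈ v 1 ∧
      (∀ k : ℤ, 2 ≤ k → k ≤ (φ : ℤ) → v k ≠ ∅) then (C4.Blue, 1)
  -- R3a-1 : ∅^φ [B!] (∅) (¬(∅^(φ-1)))  ::  →
  else if c = C4.Blue ∧ v 0 = {C4.Blue} ∧ v 1 = ∅ ∧
      ¬ (∀ k : ℤ, 2 ≤ k → k ≤ (φ : ℤ) → v k = ∅) then (C4.Blue, 1)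
  -- R3a-2 : ∅^φ [B!] (¬W, B) (¬(∅^(φ-1)))  ::  →
  else if c = C4.Blue ∧ v 0 = {C4.Blue} ∧ (C4.Blue ∈ v 1 ∧ C4.White ∉ v 1) ∧
      ¬ (∀ k : ℤ, 2 ≤ k → k ≤ (φ : ℤ) → v k = ∅) then (C4.Blue, 1)
  -- R3b : ∅^φ [B!] (W) (?^(φ-1))  ::  R, →
  else if c = C4.Blue ∧ v 0 = {C4.Blue} ∧ C4.White ∈ v 1 ∧
      (∀ k : ℤ, 2 ≤ k → k ≤ (φ : ℤ) → v k ≠ ∅) then (C4.Red, 1)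
  -- R4a : ∅^φ [R [W]] (¬∅^φ)  ::  R
  else if c = C4.White ∧ C4.Red ∈ v 0 then (C4.Red, 0)
  -- R4b : ∅^φ [B [W]] (¬∅^φ)  ::  B
  else if c = C4.White ∧ C4.Blue ∈ v 0 then (C4.Blue, 0)
  -- R5a : ∅^φ [?] (P) (∅^(φ-1))  ::  →
  else if C4.Purple ∈ v 1 ∧ (∀ k : ℤ, 2 ≤ k → k ≤ (φ : ℤ) → v k = ∅) then (c, 1)
  -- R5b-1 : ∅^φ [B!] (R!) (∅^(φ-1))  ::  P
  else if c = C4.Blue ∧ v 0 = {C4.Blue} ∧ v 1 = {C4.Red} ∧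
      (∀ k : ℤ, 2 ≤ k → k ≤ (φ : ℤ) → v k = ∅) then (C4.Purple, 0)
  -- R5b-2 : ∅^φ [B!] (R, B) (∅^(φ-1))  ::  P
  else if c = C4.Blue ∧ v 0 = {C4.Blue} ∧ (C4.Red ∈ v 1 ∧ C4.Blue ∈ v 1) ∧
      (∀ k : ℤ, 2 ≤ k → k ≤ (φ : ℤ) → v k = ∅) then (C4.Purple, 0)
  -- R5b-3 : ∅^φ [R [B]] (R!) (∅^(φ-1))  ::  P
  else if c = C4.Blue ∧ C4.Red ∈ v 0 ∧ v 1 = {C4.Red} ∧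
      (∀ k : ℤ, 2 ≤ k → k ≤ (φ : ℤ) → v k = ∅) then (C4.Purple, 0)
  else (c, 0)

open Classical in
/-- Algorithm 2: the rules are applied in the orientation in which the `φ`
nearest nodes on one side are all empty.  A robot seeing no other robot does
nothing (rule R0), and no rule is enabled for a non-border robot. -/
noncomputable def algo2 (φ : ℕ) : Algo C4 where
  out := fun c v =>
    if (∀ k : ℤ, 1 ≤ k → k ≤ (φ : ℤ) → v (-k) = ∅) ∧
       (∀ k : ℤ, 1 ≤ k → k ≤ (φ : ℤ) → v k = ∅) then (c, 0)
    else if ∀ k : ℤ, 1 ≤ k → k ≤ (φ : ℤ) → v (-k) = ∅ then algo2Rules φ c v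
    else if ∀ k : ℤ, 1 ≤ k → k ≤ (φ : ℤ) → v k = ∅ then
      ((algo2Rules φ c (fun k => v (-k))).1, -(algo2Rules φ c (fun k => v (-k))).2)
    else (c, 0)

/-- `#O_W`: the number of nodes hosting a White robot that are not border
nodes. -/
noncomputable def numWhiteNonBorder {N R : ℕ} (φ : ℕ) (cfg : Config N R C4) : ℕ :=
  {u : ZMod N | C4.White ∈ colorsAt cfg u ∧ ¬ isBorderNode φ cfg u}.ncard

end Gathering

/-!
Place `O_init / 2` robots on the first and `O_init / 2` on the last nodes of a segment of
`M_init` nodes. The configuration is invariant under the reflection `u ↦ (M_init - 1) - u`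
exchanging robot `r` with robot `Fin.rev r`, and this reflection fixes no node because
`M_init - 1` is odd and the ring has an even number of nodes. The adversary runs synchronous
rounds in which partners look in opposite orientations: they see mirrored views, so whatever
the algorithm does they compute mirrored plans, the symmetry persists forever, and two partners
never share a node.
-/

namespace Gathering

variable {N R : ℕ} {C : Type}

theorem natCast_eq_natCast_iff_of_lt {a b : ℕ} (ha : a < N) (hb : b < N) :
    (a : ZMod N) = b ↔ a = b := by
  rw [ZMod.natCast_eq_natCast_iff', Nat.mod_eq_of_lt ha, Nat.mod_eq_of_lt hb]

theorem natCast_sub_ne_self {n : ℕ} (hN : 2 ∣ N) (hn : Odd n) (u : ZMod N) :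
    (n : ZMod N) - u ≠ u := by
  intro h
  have h2 := congrArg (ZMod.castHom hN (ZMod 2)) (sub_eq_iff_eq_add.mp h)
  rw [map_natCast, map_add, hn.natCast_zmod_two] at h2
  have one_ne_double : ∀ v : ZMod 2, 1 ≠ v + v := by decide
  exact one_ne_double _ h2

theorem moveTarget_sub (m u : ZMod N) (dir : Bool) (s : SignType) :
    moveTarget (m - u) (!dir) s = m - moveTarget u dir s := by
  cases dir <;> simp only [moveTarget, Bool.not_false, Bool.not_true, Bool.false_eq_true,
    if_false, if_true] <;> push_cast <;> ring

section Synchronous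

def lookPlan (φ : ℕ) (A : Algo C) (orient : Fin R → Bool) (cfg : Config N R C) (r : Fin R) :
    C × ZMod N :=
  let out := A.out (cfg.light r) (nodeView φ cfg (cfg.pos r) (orient r))
  (out.1, moveTarget (cfg.pos r) (orient r) out.2)

def syncRound (φ : ℕ) (A : Algo C) (orient : Fin R → Bool) (cfg : Config N R C) :
    Config N R C where
  pos r := (lookPlan φ A orient cfg r).2
  light r := (lookPlan φ A orient cfg r).1

/-- Synchronous rounds as an asynchronous execution: every robot Looks at even instants and
Moves at odd instants. -/
def syncExec (φ : ℕ) (A : Algo C) (orient : Fin R → Bool) (cfg₀ : Config N R C) :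
    AsyncExec N R C φ A where
  cfg t := (syncRound φ A orient)^[t / 2] cfg₀
  plan t r :=
    if t % 2 = 1 then some (lookPlan φ A orient ((syncRound φ A orient)^[t / 2] cfg₀) r)
    else none
  init_plan _ := rfl
  step t r := by
    obtain ⟨s, rfl | rfl⟩ := Nat.even_or_odd' t
    · right; left
      simp only [Nat.mul_mod_right, Nat.mul_div_cancel_left s two_pos,
        show (2 * s + 1) / 2 = s by omega, show (2 * s + 1) % 2 = 1 by omega,
        Nat.reduceEqDiff, ↓reduceIte, true_and]
      exact ⟨orient r, rfl⟩
    · right; right; right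
      simp only [show (2 * s + 1) / 2 = s by omega, show (2 * s + 1 + 1) / 2 = s + 1 by omega,
        show (2 * s + 1) % 2 = 1 by omega, show (2 * s + 1 + 1) % 2 = 0 by omega,
        Function.iterate_succ_apply']
      exact ⟨_, _, rfl, rfl, rfl, rfl⟩
  fair r t := ⟨2 * (t / 2) + 1, by omega, by simp [show (2 * (t / 2) + 1) % 2 = 1 by omega],
    by simp [show (2 * (t / 2) + 1 + 1) % 2 = 0 by omega]⟩

end Synchronous

section Mirror

def MirrorSymmetric (m : ZMod N) (ρ : Fin R → Fin R) (cfg : Config N R C) : Prop :=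
  (∀ r, cfg.pos (ρ r) = m - cfg.pos r) ∧ ∀ r, cfg.light (ρ r) = cfg.light r

variable {m : ZMod N} {ρ : Fin R → Fin R} {cfg : Config N R C}

theorem MirrorSymmetric.colorsAt_sub (hs : MirrorSymmetric m ρ cfg) (u : ZMod N) :
    colorsAt cfg (m - u) = colorsAt cfg u := by
  ext c
  constructor
  · rintro ⟨r, hr, rfl⟩
    exact ⟨ρ r, by rw [hs.1, hr, sub_sub_cancel], hs.2 r⟩
  · rintro ⟨r, rfl, rfl⟩
    exact ⟨ρ r, hs.1 r, hs.2 r⟩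

theorem MirrorSymmetric.nodeView_sub (φ : ℕ) (hs : MirrorSymmetric m ρ cfg) (u : ZMod N) :
    nodeView φ cfg (m - u) false = nodeView φ cfg u true := by
  funext k
  simp only [nodeView, Bool.false_eq_true, if_false, if_true, Int.cast_neg,
    ← sub_eq_add_neg, sub_sub, hs.colorsAt_sub]

theorem MirrorSymmetric.lookPlan (φ : ℕ) (A : Algo C) {orient : Fin R → Bool}
    (hs : MirrorSymmetric m ρ cfg) (horient : ∀ r, orient (ρ r) = !orient r) (r : Fin R) :
    lookPlan φ A orient cfg (ρ r) =
      ((lookPlan φ A orient cfg r).1, m - (lookPlan φ A orient cfg r).2) := by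
  have hview : nodeView φ cfg (m - cfg.pos r) (!orient r) =
      nodeView φ cfg (cfg.pos r) (orient r) := by
    cases orient r
    · simpa only [sub_sub_cancel, Bool.not_false] using (hs.nodeView_sub φ (m - cfg.pos r)).symm
    · exact hs.nodeView_sub φ (cfg.pos r)
  simp only [Gathering.lookPlan, hs.1, hs.2, horient, hview, moveTarget_sub]

theorem MirrorSymmetric.syncRound (φ : ℕ) (A : Algo C) {orient : Fin R → Bool}
    (hs : MirrorSymmetric m ρ cfg) (horient : ∀ r, orient (ρ r) = !orient r) :
    MirrorSymmetric m ρ (Gathering.syncRound φ A orient cfg) :=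
  ⟨fun r => (Prod.ext_iff.mp (hs.lookPlan φ A horient r)).2,
    fun r => (Prod.ext_iff.mp (hs.lookPlan φ A horient r)).1⟩

theorem MirrorSymmetric.syncExec_cfg (φ : ℕ) (A : Algo C) {orient : Fin R → Bool}
    (hs : MirrorSymmetric m ρ cfg) (horient : ∀ r, orient (ρ r) = !orient r) (t : ℕ) :
    MirrorSymmetric m ρ ((syncExec φ A orient cfg).cfg t) := by
  show MirrorSymmetric m ρ ((Gathering.syncRound φ A orient)^[t / 2] cfg)
  induction t / 2 with
  | zero => exact hs
  | succ n ih => simpa only [Function.iterate_succ_apply'] using ih.syncRound φ A horient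

theorem MirrorSymmetric.edgeViewSymmetric {φ : ℕ} {i : ZMod N}
    (hs : MirrorSymmetric (i + i + 1) ρ cfg)
    (htwo : ∃ u v : ZMod N, u ≠ v ∧ occupiedNode cfg u ∧ occupiedNode cfg v) :
    EdgeViewSymmetric φ cfg := by
  refine ⟨htwo, i, fun k r hr => ⟨ρ r, by rw [hs.1, hr]; ring, (hs.2 r).symm, Or.inr ?_⟩⟩
  rw [hs.1]
  exact (hs.nodeView_sub φ _).symm

theorem not_achievesGathering_of_mirrorSymmetric {φ : ℕ} {A : Algo C}
    {e : AsyncExec N R C φ A} (hs : ∀ t, MirrorSymmetric m ρ (e.cfg t))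
    (hm : ∀ u, m - u ≠ u) (r : Fin R) : ¬ AchievesGathering e := by
  rintro ⟨t, u, hu⟩
  have hρ := (hs t).1 r
  rw [hu t le_rfl, hu t le_rfl] at hρ
  exact hm u hρ.symm

end Mirror

theorem SegmentInitOn.exists_ne_occupiedNode {φ M O : ℕ} {cfg : Config N R C} {b : ZMod N}
    (hseg : SegmentInitOn φ cfg b M O) (hMN : M ≤ N) :
    ∃ u v : ZMod N, u ≠ v ∧ occupiedNode cfg u ∧ occupiedNode cfg v := by
  refine ⟨b, b + ((M - 1 : ℕ) : ZMod N), fun h => ?_, hseg.2.1, hseg.2.2.1⟩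
  have hM := hseg.1
  have h0 : ((M - 1 : ℕ) : ZMod N) = ((0 : ℕ) : ZMod N) := by
    rw [Nat.cast_zero]
    exact left_eq_add.mp h
  have := (natCast_eq_natCast_iff_of_lt (by omega) (by omega)).mp h0
  omega

section Blocks

def blockPos (M O : ℕ) (r : Fin O) : ℕ := if (r : ℕ) < O / 2 then r else M - O + r

def blockConfig (N M O : ℕ) (c : C) : Config N O C where
  pos r := (blockPos M O r : ZMod N)
  light _ := c

def blockOrient (O : ℕ) (r : Fin O) : Bool := decide ((r : ℕ) < O / 2)

variable {M O : ℕ}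

theorem blockOrient_rev (hO : Even O) (r : Fin O) : blockOrient O r.rev = !blockOrient O r := by
  obtain ⟨h, rfl⟩ := hO
  have := r.2
  simp only [blockOrient, Fin.val_rev, ← decide_not, decide_eq_decide]
  omega

theorem blockPos_lt (hOM : O ≤ M) (r : Fin O) : blockPos M O r < M := by
  have := r.2
  unfold blockPos
  split <;> omega

theorem blockPos_injective : Function.Injective (blockPos M O) := by
  intro r s h
  have := r.2
  unfold blockPos at h
  ext
  split_ifs at h <;> omega

theorem blockPos_rev_add (hO : Even O) (hOM : O ≤ M) (r : Fin O) :
    blockPos M O r.rev + blockPos M O r = M - 1 := by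
  obtain ⟨h, rfl⟩ := hO
  have := r.2
  simp only [blockPos, Fin.val_rev]
  split_ifs <;> omega

theorem mirrorSymmetric_blockConfig (hO : Even O) (hOM : O ≤ M) (c : C) :
    MirrorSymmetric ((M - 1 : ℕ) : ZMod N) Fin.rev (blockConfig N M O c) := by
  refine ⟨fun r => ?_, fun _ => rfl⟩
  rw [eq_sub_iff_add_eq, ← blockPos_rev_add hO hOM r, Nat.cast_add]
  rfl

theorem occupiedNode_blockConfig_natCast_iff (hOM : O ≤ M) (hMN : M ≤ N) (c : C) {i : ℕ}
    (hi : i < N) : occupiedNode (blockConfig N M O c) (i : ZMod N) ↔ ∃ r, blockPos M O r = i :=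
  exists_congr fun r =>
    natCast_eq_natCast_iff_of_lt ((blockPos_lt hOM r).trans_le hMN) hi

theorem segmentInitOn_blockConfig {φ : ℕ} (h2O : 2 ≤ O) (hOM : O ≤ M) (hφ : M ≤ φ + 1)
    (hN : M + φ ≤ N) (c : C) : SegmentInitOn φ (blockConfig N M O c) 0 M O := by
  have hocc : ∀ i : ℕ, i < N →
      (occupiedNode (blockConfig N M O c) i ↔ ∃ r, blockPos M O r = i) := fun _ =>
    occupiedNode_blockConfig_natCast_iff hOM (by omega) c
  have hfirst : occupiedNode (blockConfig N M O c) 0 := by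
    rw [← Nat.cast_zero, hocc _ (by omega)]
    exact ⟨⟨0, by omega⟩, if_pos (show 0 < O / 2 by omega)⟩
  have hlast : occupiedNode (blockConfig N M O c) (0 + ((M - 1 : ℕ) : ZMod N)) := by
    rw [zero_add, hocc _ (by omega)]
    exact ⟨⟨O - 1, by omega⟩, by simp only [blockPos]; rw [if_neg (by omega)]; omega⟩
  refine ⟨by omega, hfirst, hlast, ?_, fun k hk hkφ => ⟨?_, ?_⟩,
    fun i hi _ => ⟨M - 1, by omega, by omega, by omega, hlast⟩, ?_⟩
  · rintro u ⟨r, rfl⟩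
    exact ⟨blockPos M O r, blockPos_lt hOM r, (zero_add _).symm⟩
  · rw [show (0 : ZMod N) - k = ((N - k : ℕ) : ZMod N) by
      rw [Nat.cast_sub (by omega), ZMod.natCast_self], hocc _ (by omega)]
    rintro ⟨r, hr⟩
    have := blockPos_lt hOM r
    omega
  · rw [zero_add, ← Nat.cast_add, hocc _ (by omega)]
    rintro ⟨r, hr⟩
    have := blockPos_lt hOM r
    omega
  · have hrange : {i : Fin M | occupiedNode (blockConfig N M O c) (0 + ((i : ℕ) : ZMod N))} =
        Set.range fun r => (⟨blockPos M O r, blockPos_lt hOM r⟩ : Fin M) := by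
      ext i
      rw [Set.mem_ofPred_eq, zero_add, hocc _ (by omega), Set.mem_range]
      simp only [Fin.ext_iff]
    rw [hrange, Set.ncard_range_of_injective, Nat.card_eq_fintype_card, Fintype.card_fin]
    exact fun r s h => blockPos_injective (congrArg Fin.val h)

end Blocks

/-- **Corollary 22.** For every even `M_init` and even `O_init` there exists
an initial configuration with those parameters in which all robots have the
same color (namely an edge-view-symmetric one) from which no deterministic
algorithm achieves gathering. -/
theorem even_even_monochromatic_impossible
    (C : Type) (c0 : C) (Minit Oinit : ℕ)
    (hM : Even Minit) (hO : Even Oinit) (hO2 : 2 ≤ Oinit) (hOM : Oinit ≤ Minit) :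
    ∃ (N R phi : ℕ), 3 ≤ N ∧ 1 ≤ phi ∧
      ∃ cfg0 : Config N R C,
        AdmissibleInit phi cfg0 c0 Minit Oinit ∧
        EdgeViewSymmetric phi cfg0 ∧
        ∀ A : Algo C, ∃ e : AsyncExec N R C phi A,
          e.cfg 0 = cfg0 ∧ ¬ AchievesGathering e := by
  obtain ⟨k, hk⟩ := hM
  set cfg0 := blockConfig (3 * Minit) Minit Oinit c0
  have hseg : SegmentInitOn Minit cfg0 0 Minit Oinit :=
    segmentInitOn_blockConfig hO2 hOM (by omega) (by omega) c0
  have hsym : MirrorSymmetric ((Minit - 1 : ℕ) : ZMod (3 * Minit)) Fin.rev cfg0 :=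
    mirrorSymmetric_blockConfig hO hOM c0
  have hcenter : ((Minit - 1 : ℕ) : ZMod (3 * Minit)) =
      ((k - 1 : ℕ) : ZMod _) + ((k - 1 : ℕ) : ZMod _) + 1 := by
    rw [show Minit - 1 = (k - 1) + (k - 1) + 1 by omega]
    push_cast
    ring
  have hfree : ∀ u, ((Minit - 1 : ℕ) : ZMod (3 * Minit)) - u ≠ u :=
    natCast_sub_ne_self ⟨3 * k, by omega⟩ ⟨k - 1, by omega⟩
  refine ⟨3 * Minit, Oinit, Minit, by omega, by omega, cfg0, ⟨fun _ => rfl, 0, hseg⟩,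
    (hcenter ▸ hsym).edgeViewSymmetric (hseg.exists_ne_occupiedNode (by omega)),
    fun A => ⟨syncExec Minit A (blockOrient Oinit) cfg0, rfl, ?_⟩⟩
  exact not_achievesGathering_of_mirrorSymmetric
    (hsym.syncExec_cfg Minit A (blockOrient_rev hO)) hfree ⟨0, by omega⟩

end Gathering
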